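/- With φ = (1+√5)/2 and q = (1-√5)/(1+√5), the q-binomial coefficient satisfies [n choose k]_q = binom(n,k)_F · φ^{k(k-n)}, where binom(n,k)_F is the Fibonomial coefficient. -/

import Mathlib

noncomputable def goldenPhi : ℝ := (1 + Real.sqrt 5) / 2

noncomputable def fibQ : ℝ := (1 - Real.sqrt 5) / (1 + Real.sqrt 5)

/-- The q-Pochhammer symbol `(a;q)_n = ∏_{j=0}^{n-1} (1 - a q^j)`. -/
noncomputable def qPoch (a q : ℝ) (n : ℕ) : ℝ := ∏ j ∈ Finset.range n, (1 - a * q ^ j)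

/-- The q-binomial coefficient `(q;q)_n / ((q;q)_k (q;q)_{n-k})`. -/
noncomputable def qBinom (q : ℝ) (n k : ℕ) : ℝ :=
  qPoch q q n / (qPoch q q k * qPoch q q (n - k))

/-- The Fibonomial coefficient `∏_{i=1}^k F_{n-i+1}/F_i`, as a real number. -/
noncomputable def fibinom (n k : ℕ) : ℝ :=
  ∏ j ∈ Finset.range k, (Nat.fib (n - j) : ℝ) / (Nat.fib (j + 1) : ℝ)

/-! Since `fibQ = ψ / φ`, Binet's formula gives `1 - fibQ ^ j = √5 F_j / φ ^ j`. Hence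
`(fibQ; fibQ)_n = √5 ^ n F_1 ⋯ F_n / φ ^ (1 + ⋯ + n)`, and in the quotient defining the
q-binomial coefficient the powers of `√5` cancel while the exponents of `φ` leave `φ ^ (k (n - k))`. -/

open Finset goldenRatio

lemma goldenPhi_eq : goldenPhi = φ := rfl

lemma fibQ_eq : fibQ = ψ / φ := by
  have h : 1 + √5 ≠ 0 := by positivity
  rw [fibQ, Real.goldenRatio, Real.goldenConj]
  field_simp

lemma one_sub_fibQ_pow (j : ℕ) : 1 - fibQ ^ j = √5 * Nat.fib j / φ ^ j := by
  have h5 : √5 ≠ 0 := by positivity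
  have hφ : φ ≠ 0 := Real.goldenRatio_ne_zero
  rw [fibQ_eq, div_pow, Real.coe_fib_eq]
  field_simp

lemma qPoch_self (q : ℝ) (n : ℕ) : qPoch q q n = ∏ j ∈ range n, (1 - q ^ (j + 1)) := by
  simp only [qPoch, pow_succ']

noncomputable def fibFactorial (n : ℕ) : ℝ := ∏ j ∈ range n, (Nat.fib (j + 1) : ℝ)

lemma fibFactorial_pos (n : ℕ) : 0 < fibFactorial n :=
  prod_pos fun j _ ↦ by exact_mod_cast Nat.fib_pos.mpr j.succ_pos

lemma fibFactorial_add (m k : ℕ) :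
    fibFactorial (m + k) = fibFactorial m * ∏ j ∈ range k, (Nat.fib (m + j + 1) : ℝ) :=
  prod_range_add _ m k

lemma fibinom_add (k m : ℕ) :
    fibinom (k + m) k = fibFactorial (k + m) / (fibFactorial k * fibFactorial m) := by
  have top : ∏ j ∈ range k, (Nat.fib (k + m - j) : ℝ)
      = ∏ j ∈ range k, (Nat.fib (m + j + 1) : ℝ) := by
    rw [← prod_range_reflect]
    refine prod_congr rfl fun j hj ↦ ?_
    rw [mem_range] at hj
    congr 2
    omega
  have hk := (fibFactorial_pos k).ne'
  have hm := (fibFactorial_pos m).ne'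
  rw [fibinom, prod_div_distrib, top, add_comm k m, fibFactorial_add m k, ← fibFactorial]
  field_simp

lemma sum_range_id_succ_add (k m : ℕ) :
    ∑ j ∈ range (k + m), (j + 1) = ∑ j ∈ range k, (j + 1) + ∑ j ∈ range m, (j + 1) + k * m := by
  rw [sum_range_add]
  have shift : ∑ j ∈ range m, (k + j + 1) = ∑ j ∈ range m, (j + 1) + m * k := by
    rw [← card_range m, ← smul_eq_mul, ← sum_const, card_range, ← sum_add_distrib]
    exact sum_congr rfl fun j _ ↦ by ring
  rw [shift]
  ring

lemma qPoch_fibQ (n : ℕ) :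
    qPoch fibQ fibQ n = √5 ^ n * fibFactorial n / φ ^ ∑ j ∈ range n, (j + 1) := by
  simp only [qPoch_self, one_sub_fibQ_pow, prod_div_distrib, prod_mul_distrib, prod_const,
    card_range, prod_pow_eq_pow_sum, fibFactorial]

theorem qbinom_eq_fibinom (n k : ℕ) (hk : k ≤ n) :
    qBinom fibQ n k = fibinom n k * goldenPhi ^ ((k : ℤ) * ((k : ℤ) - (n : ℤ))) := by
  obtain ⟨m, rfl⟩ := Nat.exists_eq_add_of_le hk
  have exponent : (k : ℤ) * ((k : ℤ) - ((k + m : ℕ) : ℤ)) = -((k * m : ℕ) : ℤ) := by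
    push_cast
    ring
  rw [qBinom, Nat.add_sub_cancel_left, qPoch_fibQ, qPoch_fibQ, qPoch_fibQ, sum_range_id_succ_add,
    fibinom_add, exponent, zpow_neg, zpow_natCast, goldenPhi_eq, pow_add, pow_add, pow_add]
  have := (fibFactorial_pos k).ne'
  have := (fibFactorial_pos m).ne'
  have := (fibFactorial_pos (k + m)).ne'
  have := Real.goldenRatio_pos
  field_simp
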